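/- Let H be a separable real Hilbert space, B₁ and B₂ bounded linear operators on H, a ∈ H, q₀ > 0, μ a finite Borel measure on H, ρ : H → ℂ Borel measurable with ∫_H k(q₀; w) |ρ(w)| dμ(w) < ∞, and φ : H → ℂ Borel measurable with |φ(w)| ≤ 1 for all w. Let q₁, q₂ be real numbers with |q₁| > q₀ and |q₂| > q₀. Then the function T(λ₁, λ₂) = ∫_H φ(w) ψ(λ₁, λ₂; w) ρ(w) dμ(w) converges, as (λ₁, λ₂) → (−iq₁, −iq₂) through points with Re(λ₁) > 0 and Re(λ₂) > 0, to ∫_H φ(w) ψ(−iq₁, −iq₂; w) ρ(w) dμ(w) (which is a well-defined integral of a μ-integrable function). -/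

import Mathlib

open MeasureTheory
open scoped RealInnerProductSpace

/-- The function `ψ(λ₁, λ₂; w)` of equation (3.8) of the paper, with `Bⱼ` playing
the role of `Aⱼ^{1/2}`. -/
noncomputable def psi {H : Type*} [NormedAddCommGroup H] [InnerProductSpace ℝ H]
    (B₁ B₂ : H →L[ℝ] H) (a : H) (l₁ l₂ : ℂ) (w : H) : ℂ :=
  Complex.exp
    ((-((‖B₁ w‖ : ℂ) ^ 2) / (2 * l₁)
        + Complex.I * l₁ ^ (-(1 : ℂ) / 2) * ((⟪B₁ w, a⟫ : ℝ) : ℂ))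
      + (-((‖B₂ w‖ : ℂ) ^ 2) / (2 * l₂)
        + Complex.I * l₂ ^ (-(1 : ℂ) / 2) * ((⟪B₂ w, a⟫ : ℝ) : ℂ)))

/-- The dominating function `k(q₀; w)` of equation (3.10) of the paper. -/
noncomputable def kfun {H : Type*} [NormedAddCommGroup H] [InnerProductSpace ℝ H]
    (B₁ B₂ : H →L[ℝ] H) (a : H) (q₀ : ℝ) (w : H) : ℝ :=
  Real.exp ((2 * q₀) ^ (-(1 : ℝ) / 2) * ‖B₁‖ * ‖w‖ * ‖a‖
    + (2 * q₀) ^ (-(1 : ℝ) / 2) * ‖B₂‖ * ‖w‖ * ‖a‖)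

/-!
The proof is dominated convergence with dominating function `k(q₀; ·)|ρ|`. The key estimate is
that `z = λ^{-1/2}` satisfies `z² = λ⁻¹`, so `Re λ ≥ 0` forces `Re z² ≥ 0`, i.e. `(Im z)² ≤ |z|²/2`,
hence `|Im z| ≤ (2|λ|)^{-1/2} ≤ (2q₀)^{-1/2}` whenever `|λ| ≥ q₀`. Since also
`Re(-b²/(2λ)) ≤ 0`, this bounds `|ψ(λ₁, λ₂; w)|` by `k(q₀; w)` on a neighbourhood of the boundary
point within the closed right half-planes. Off the cut `(-∞, 0]`, `ψ` is continuous in `λ`, which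
gives the pointwise convergence.
-/

open Complex Filter Topology

lemma Complex.two_mul_im_sq_le_norm_sq {z : ℂ} (h : 0 ≤ (z ^ 2).re) :
    2 * z.im ^ 2 ≤ ‖z‖ ^ 2 := by
  rw [Complex.sq_norm, normSq_apply]
  rw [sq, mul_re] at h
  nlinarith

lemma Complex.two_mul_im_cpow_neg_half_sq_le {l : ℂ} (hl : 0 ≤ l.re) :
    2 * (l ^ (-(1 : ℂ) / 2)).im ^ 2 ≤ ‖l‖⁻¹ := by
  have hsq : (l ^ (-(1 : ℂ) / 2)) ^ 2 = l⁻¹ := by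
    rw [← cpow_nat_mul]; norm_num [cpow_neg_one]
  calc _ ≤ ‖l ^ (-(1 : ℂ) / 2)‖ ^ 2 :=
        two_mul_im_sq_le_norm_sq (by rw [hsq, inv_re]; exact div_nonneg hl (normSq_nonneg l))
    _ = ‖l‖⁻¹ := by rw [← norm_pow, hsq, norm_inv]

lemma Complex.abs_im_cpow_neg_half_le {l : ℂ} {q₀ : ℝ} (hq₀ : 0 < q₀) (hl : q₀ ≤ ‖l‖)
    (hre : 0 ≤ l.re) : |(l ^ (-(1 : ℂ) / 2)).im| ≤ (2 * q₀) ^ (-(1 : ℝ) / 2) := by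
  rw [show -(1 : ℝ) / 2 = -(1 / 2) by ring, Real.rpow_neg (by positivity), ← Real.sqrt_eq_rpow,
    ← Real.sqrt_inv]
  apply Real.abs_le_sqrt
  have him := two_mul_im_cpow_neg_half_sq_le hre
  have hinv : ‖l‖⁻¹ ≤ q₀⁻¹ := inv_anti₀ hq₀ hl
  rw [mul_inv]
  linarith

lemma Complex.re_neg_sq_div_two_mul_nonpos {l : ℂ} (hl : 0 ≤ l.re) (b : ℝ) :
    (-((b : ℂ) ^ 2) / (2 * l)).re ≤ 0 := by
  rw [div_re]
  norm_cast
  simp only [mul_re, re_ofNat, im_ofNat, zero_mul, sub_zero, neg_mul, map_mul, normSq_ofNat,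
    mul_im, add_zero, zero_div]
  exact div_nonpos_of_nonpos_of_nonneg (neg_nonpos.2 (mul_nonneg (sq_nonneg b) (by linarith)))
    (mul_nonneg (by norm_num) (normSq_nonneg l))

lemma Complex.norm_exp_neg_sq_div_add_cpow_le {l : ℂ} {q₀ : ℝ} (hq₀ : 0 < q₀) (hl : q₀ ≤ ‖l‖)
    (hre : 0 ≤ l.re) (b c : ℝ) :
    ‖cexp (-((b : ℂ) ^ 2) / (2 * l) + I * l ^ (-(1 : ℂ) / 2) * c)‖
      ≤ Real.exp ((2 * q₀) ^ (-(1 : ℝ) / 2) * |c|) := by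
  have hv := mul_le_mul_of_nonneg_right (abs_im_cpow_neg_half_le hq₀ hl hre) (abs_nonneg c)
  set v := l ^ (-(1 : ℂ) / 2)
  have hre_v : (I * v * c).re = -v.im * c := by simp [mul_re]
  have hvc : -v.im * c ≤ |v.im| * |c| := by rw [← abs_mul, neg_mul]; exact neg_le_abs _
  rw [norm_exp, Real.exp_le_exp, add_re, hre_v]
  linarith [re_neg_sq_div_two_mul_nonpos hre b]

section Psi

variable {H : Type*} [NormedAddCommGroup H] [InnerProductSpace ℝ H]

lemma ContinuousLinearMap.abs_inner_apply_le (B : H →L[ℝ] H) (w a : H) :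
    |⟪B w, a⟫| ≤ ‖B‖ * ‖w‖ * ‖a‖ :=
  (abs_real_inner_le_norm _ _).trans (mul_le_mul_of_nonneg_right (B.le_opNorm w) (norm_nonneg a))

variable (B₁ B₂ : H →L[ℝ] H) (a : H)

lemma norm_exp_psi_term_le (B : H →L[ℝ] H) {l : ℂ} {q₀ : ℝ} (hq₀ : 0 < q₀) (hl : q₀ ≤ ‖l‖)
    (hre : 0 ≤ l.re) (w : H) :
    ‖cexp (-((‖B w‖ : ℂ) ^ 2) / (2 * l) + I * l ^ (-(1 : ℂ) / 2) * ((⟪B w, a⟫ : ℝ) : ℂ))‖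
      ≤ Real.exp ((2 * q₀) ^ (-(1 : ℝ) / 2) * ‖B‖ * ‖w‖ * ‖a‖) := by
  refine (norm_exp_neg_sq_div_add_cpow_le hq₀ hl hre _ _).trans (Real.exp_le_exp.2 ?_)
  simpa only [mul_assoc] using
    mul_le_mul_of_nonneg_left (B.abs_inner_apply_le w a) (Real.rpow_nonneg (by positivity) _)

lemma norm_psi_le_kfun {l₁ l₂ : ℂ} {q₀ : ℝ} (hq₀ : 0 < q₀) (hl₁ : q₀ ≤ ‖l₁‖) (hre₁ : 0 ≤ l₁.re)
    (hl₂ : q₀ ≤ ‖l₂‖) (hre₂ : 0 ≤ l₂.re) (w : H) :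
    ‖psi B₁ B₂ a l₁ l₂ w‖ ≤ kfun B₁ B₂ a q₀ w := by
  rw [psi, kfun, exp_add, norm_mul, Real.exp_add]
  exact mul_le_mul (norm_exp_psi_term_le a B₁ hq₀ hl₁ hre₁ w)
    (norm_exp_psi_term_le a B₂ hq₀ hl₂ hre₂ w) (norm_nonneg _) (Real.exp_pos _).le

lemma continuous_psi (l₁ l₂ : ℂ) : Continuous (psi B₁ B₂ a l₁ l₂) := by
  unfold psi; fun_prop

lemma continuousAt_psi (w : H) {p : ℂ × ℂ} (h₁ : p.1 ∈ slitPlane) (h₂ : p.2 ∈ slitPlane) :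
    ContinuousAt (fun l : ℂ × ℂ => psi B₁ B₂ a l.1 l.2 w) p := by
  have h₁0 : 2 * p.1 ≠ 0 := mul_ne_zero two_ne_zero (slitPlane_ne_zero h₁)
  have h₂0 : 2 * p.2 ≠ 0 := mul_ne_zero two_ne_zero (slitPlane_ne_zero h₂)
  unfold psi
  fun_prop (disch := assumption)

lemma norm_mul_psi_mul_le {q₀ : ℝ} (hq₀ : 0 < q₀) {φ : H → ℂ} (hφ : ∀ w, ‖φ w‖ ≤ 1)
    {l₁ l₂ : ℂ} (hl₁ : q₀ ≤ ‖l₁‖) (hre₁ : 0 ≤ l₁.re) (hl₂ : q₀ ≤ ‖l₂‖) (hre₂ : 0 ≤ l₂.re)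
    (ρ : H → ℂ) (w : H) :
    ‖φ w * psi B₁ B₂ a l₁ l₂ w * ρ w‖ ≤ kfun B₁ B₂ a q₀ w * ‖ρ w‖ := by
  rw [norm_mul, norm_mul]
  gcongr
  simpa using mul_le_mul (hφ w) (norm_psi_le_kfun B₁ B₂ a hq₀ hl₁ hre₁ hl₂ hre₂ w)
    (norm_nonneg _) zero_le_one

end Psi

section Integral

variable {H : Type*} [NormedAddCommGroup H] [InnerProductSpace ℝ H] [MeasurableSpace H]
  (B₁ B₂ : H →L[ℝ] H) (a : H) {q₀ : ℝ} {μ : Measure H} {ρ φ : H → ℂ}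

lemma aestronglyMeasurable_mul_psi_mul [OpensMeasurableSpace H] (hρ : Measurable ρ)
    (hφm : Measurable φ) (l₁ l₂ : ℂ) :
    AEStronglyMeasurable (fun w => φ w * psi B₁ B₂ a l₁ l₂ w * ρ w) μ :=
  ((hφm.mul (continuous_psi B₁ B₂ a l₁ l₂).measurable).mul hρ).aestronglyMeasurable

variable [OpensMeasurableSpace H] (hq₀ : 0 < q₀)
  (hk : Integrable (fun w => kfun B₁ B₂ a q₀ w * ‖ρ w‖) μ) (hρ : Measurable ρ)
  (hφm : Measurable φ) (hφ : ∀ w, ‖φ w‖ ≤ 1)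
include hq₀ hk hρ hφm hφ

lemma integrable_mul_psi_mul {l₁ l₂ : ℂ} (hl₁ : q₀ ≤ ‖l₁‖) (hre₁ : 0 ≤ l₁.re)
    (hl₂ : q₀ ≤ ‖l₂‖) (hre₂ : 0 ≤ l₂.re) :
    Integrable (fun w => φ w * psi B₁ B₂ a l₁ l₂ w * ρ w) μ :=
  hk.mono' (aestronglyMeasurable_mul_psi_mul B₁ B₂ a hρ hφm l₁ l₂)
    (.of_forall (norm_mul_psi_mul_le B₁ B₂ a hq₀ hφ hl₁ hre₁ hl₂ hre₂ ρ))

theorem tendsto_integral_mul_psi_mul {p : ℂ × ℂ} (hp₁ : p.1 ∈ slitPlane) (hp₂ : p.2 ∈ slitPlane)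
    (hq₁ : q₀ < ‖p.1‖) (hq₂ : q₀ < ‖p.2‖) :
    Tendsto (fun l : ℂ × ℂ => ∫ w, φ w * psi B₁ B₂ a l.1 l.2 w * ρ w ∂μ)
      (𝓝[{l | 0 ≤ l.1.re ∧ 0 ≤ l.2.re}] p) (𝓝 (∫ w, φ w * psi B₁ B₂ a p.1 p.2 w * ρ w ∂μ)) := by
  have hnorm : ∀ᶠ l : ℂ × ℂ in 𝓝 p, q₀ < ‖l.1‖ ∧ q₀ < ‖l.2‖ :=
    ((continuous_fst.norm.tendsto p).eventually (lt_mem_nhds hq₁)).and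
      ((continuous_snd.norm.tendsto p).eventually (lt_mem_nhds hq₂))
  refine tendsto_integral_filter_of_dominated_convergence _
    (.of_forall fun l => aestronglyMeasurable_mul_psi_mul B₁ B₂ a hρ hφm l.1 l.2) ?_ hk
    (.of_forall fun w => ?_)
  · filter_upwards [self_mem_nhdsWithin, nhdsWithin_le_nhds hnorm] with l hre hl
    exact .of_forall (norm_mul_psi_mul_le B₁ B₂ a hq₀ hφ hl.1.le hre.1 hl.2.le hre.2 ρ)
  · exact ((continuousAt_const.mul (continuousAt_psi B₁ B₂ a w hp₁ hp₂)).mul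
      continuousAt_const).continuousWithinAt.tendsto

end Integral

theorem stmt11_general {H : Type*} [NormedAddCommGroup H] [InnerProductSpace ℝ H]
    [MeasurableSpace H] [BorelSpace H]
    (B₁ B₂ : H →L[ℝ] H) (a : H) (q₀ : ℝ) (hq₀ : 0 < q₀)
    (μ : Measure H)
    (ρ : H → ℂ) (hρ : Measurable ρ)
    (hk : Integrable (fun w => kfun B₁ B₂ a q₀ w * ‖ρ w‖) μ)
    (φ : H → ℂ) (hφm : Measurable φ) (hφ : ∀ w, ‖φ w‖ ≤ 1)
    (q₁ q₂ : ℝ) (hq₁ : q₀ < |q₁|) (hq₂ : q₀ < |q₂|) :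
    Integrable
      (fun w => φ w * psi B₁ B₂ a (-Complex.I * q₁) (-Complex.I * q₂) w * ρ w) μ ∧
    Filter.Tendsto
      (fun p : ℂ × ℂ => ∫ w, φ w * psi B₁ B₂ a p.1 p.2 w * ρ w ∂μ)
      (nhdsWithin (-Complex.I * q₁, -Complex.I * q₂)
        {p : ℂ × ℂ | 0 < p.1.re ∧ 0 < p.2.re})
      (nhds (∫ w, φ w * psi B₁ B₂ a (-Complex.I * q₁) (-Complex.I * q₂) w * ρ w ∂μ)) := by
  have hnorm : ∀ q : ℝ, ‖-I * (q : ℂ)‖ = |q| := by simp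
  have hre : ∀ q : ℝ, 0 ≤ (-I * (q : ℂ)).re := by simp
  have hslit : ∀ q : ℝ, q₀ < |q| → -I * (q : ℂ) ∈ slitPlane := fun q hq => by
    simp [mem_slitPlane_iff, abs_pos.1 (hq₀.trans hq)]
  have hl₁ : q₀ < ‖-I * (q₁ : ℂ)‖ := by rwa [hnorm]
  have hl₂ : q₀ < ‖-I * (q₂ : ℂ)‖ := by rwa [hnorm]
  refine ⟨integrable_mul_psi_mul B₁ B₂ a hq₀ hk hρ hφm hφ hl₁.le (hre q₁) hl₂.le (hre q₂), ?_⟩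
  have hsub : {p : ℂ × ℂ | 0 < p.1.re ∧ 0 < p.2.re} ⊆ {p | 0 ≤ p.1.re ∧ 0 ≤ p.2.re} :=
    fun p hp => ⟨hp.1.le, hp.2.le⟩
  have := tendsto_integral_mul_psi_mul B₁ B₂ a hq₀ hk hρ hφm hφ (p := (-I * q₁, -I * q₂))
    (hslit q₁ hq₁) (hslit q₂ hq₂) hl₁ hl₂
  exact this.mono_left (nhdsWithin_mono _ hsub)

/-- Boundary-limit assertion of Theorem 3.1 (the `L₁` analytic generalized
Fourier–Feynman transform): as `(λ₁, λ₂) → (−iq₁, −iq₂)` through points with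
positive real parts, `T(λ₁, λ₂)` converges to the integral at `(−iq₁, −iq₂)`,
which is a well-defined integral of a `μ`-integrable function. -/
theorem stmt11 {H : Type*} [NormedAddCommGroup H] [InnerProductSpace ℝ H]
    [TopologicalSpace.SeparableSpace H] [MeasurableSpace H] [BorelSpace H]
    (B₁ B₂ : H →L[ℝ] H) (a : H) (q₀ : ℝ) (hq₀ : 0 < q₀)
    (μ : Measure H) [IsFiniteMeasure μ]
    (ρ : H → ℂ) (hρ : Measurable ρ)
    (hk : Integrable (fun w => kfun B₁ B₂ a q₀ w * ‖ρ w‖) μ)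
    (φ : H → ℂ) (hφm : Measurable φ) (hφ : ∀ w, ‖φ w‖ ≤ 1)
    (q₁ q₂ : ℝ) (hq₁ : q₀ < |q₁|) (hq₂ : q₀ < |q₂|) :
    Integrable
      (fun w => φ w * psi B₁ B₂ a (-Complex.I * q₁) (-Complex.I * q₂) w * ρ w) μ ∧
    Filter.Tendsto
      (fun p : ℂ × ℂ => ∫ w, φ w * psi B₁ B₂ a p.1 p.2 w * ρ w ∂μ)
      (nhdsWithin (-Complex.I * q₁, -Complex.I * q₂)
        {p : ℂ × ℂ | 0 < p.1.re ∧ 0 < p.2.re})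
      (nhds (∫ w, φ w * psi B₁ B₂ a (-Complex.I * q₁) (-Complex.I * q₂) w * ρ w ∂μ)) :=
  stmt11_general B₁ B₂ a q₀ hq₀ μ ρ hρ hk φ hφm hφ q₁ q₂ hq₁ hq₂
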